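/- The only minimal braces of order at most eight are K₂, C₄, K_{3,3} and the cube B₈. -/

import Mathlib

namespace MinimalBraces

open SimpleGraph

/-- The degree of a vertex, via the cardinality of its neighbor set. -/
noncomputable def mdeg {V : Type*} (G : SimpleGraph V) (v : V) : ℕ :=
  (G.neighborSet v).ncard

/-- `G` has a perfect matching. -/
def HasPerfectMatching {V : Type*} (G : SimpleGraph V) : Prop :=
  ∃ M : G.Subgraph, M.IsPerfectMatching

/-- A connected graph with at least one edge is matching covered if every edge
lies in some perfect matching. -/
def IsMatchingCovered {V : Type*} (G : SimpleGraph V) : Prop :=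
  G.Connected ∧ G.edgeSet.Nonempty ∧
    ∀ e ∈ G.edgeSet, ∃ M : G.Subgraph, M.IsPerfectMatching ∧ e ∈ M.edgeSet

/-- `A`, `B` are the color classes of a bipartition of `G`. -/
def IsBipartition {V : Type*} (G : SimpleGraph V) (A B : Set V) : Prop :=
  A ∪ B = Set.univ ∧ A ∩ B = ∅ ∧
    ∀ u v : V, G.Adj u v → (u ∈ A ∧ v ∈ B) ∨ (u ∈ B ∧ v ∈ A)

/-- `G` is bipartite (admits a bipartition into two color classes). -/
def IsBipartite' {V : Type*} (G : SimpleGraph V) : Prop :=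
  ∃ A B : Set V, IsBipartition G A B

/-- The cut `∂(X)`: the set of edges of `G` with exactly one end in `X`. -/
def cutEdges {V : Type*} (G : SimpleGraph V) (X : Set V) : Set (Sym2 V) :=
  {e | e ∈ G.edgeSet ∧ ∃ u v : V, e = s(u, v) ∧ u ∈ X ∧ v ∉ X}

/-- The cut `∂(X)` is tight: every perfect matching has exactly one edge in it. -/
def IsTightCut {V : Type*} (G : SimpleGraph V) (X : Set V) : Prop :=
  ∀ M : G.Subgraph, M.IsPerfectMatching → (M.edgeSet ∩ cutEdges G X).ncard = 1

/-- A shore is trivial if it or its complement is a singleton. -/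
def IsTrivialShore {V : Type*} (X : Set V) : Prop :=
  (∃ v, X = ({v} : Set V)) ∨ (∃ v, Xᶜ = ({v} : Set V))

/-- A brace: a bipartite matching covered graph free of nontrivial tight cuts. -/
def IsBrace {V : Type*} (G : SimpleGraph V) : Prop :=
  IsBipartite' G ∧ IsMatchingCovered G ∧ ∀ X : Set V, IsTightCut G X → IsTrivialShore X

/-- A minimal brace: deleting any edge results in a graph that is not a brace. -/
def IsMinimalBrace {V : Type*} (G : SimpleGraph V) : Prop :=
  IsBrace G ∧ ∀ e ∈ G.edgeSet, ¬ IsBrace (G.deleteEdges {e})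

/-- The neighborhood of a set of vertices. -/
def setNbhd {V : Type*} (G : SimpleGraph V) (Z : Set V) : Set V :=
  {v | ∃ z ∈ Z, G.Adj z v}

/-- An edge of a (simple) brace is superfluous if deleting it leaves a brace. -/
def IsSuperfluous {V : Type*} (G : SimpleGraph V) (e : Sym2 V) : Prop :=
  e ∈ G.edgeSet ∧ IsBrace (G.deleteEdges {e})

/-- A set of edges of `G` forming a matching. -/
def IsMatchingSet {V : Type*} (G : SimpleGraph V) (M : Set (Sym2 V)) : Prop :=
  M ⊆ G.edgeSet ∧ ∀ e₁ ∈ M, ∀ e₂ ∈ M, e₁ ≠ e₂ → ∀ v : V, ¬ (v ∈ e₁ ∧ v ∈ e₂)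

/-- `G` is 2-extendable: it has a matching of size two, and every matching of
size two extends to a perfect matching. -/
def IsTwoExtendable {V : Type*} (G : SimpleGraph V) : Prop :=
  (∃ M : Set (Sym2 V), IsMatchingSet G M ∧ M.ncard = 2) ∧
  ∀ M : Set (Sym2 V), IsMatchingSet G M → M.ncard = 2 →
    ∃ N : G.Subgraph, N.IsPerfectMatching ∧ M ⊆ N.edgeSet

/-- `G` is 3-connected: more than three vertices, and removing any at most two
vertices leaves a connected graph. -/
def IsThreeConnected {V : Type*} [Fintype V] (G : SimpleGraph V) : Prop :=
  4 ≤ Fintype.card V ∧ ∀ S : Set V, S.ncard ≤ 2 → (G.induce Sᶜ).Connected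

/-! ### Retracts (bicontraction of all degree-two vertices) -/

/-- `f : V → W` realizes `H` as the retract of `G`: the fibers of `f` are exactly
the closed neighborhoods of the degree-two vertices of `G` (and singletons
otherwise), and adjacency in `H` is induced by `G`. -/
def IsRetractMap {V W : Type*} (G : SimpleGraph V) (H : SimpleGraph W) (f : V → W) : Prop :=
  Function.Surjective f ∧
  (∀ u v : V, f u = f v ↔ (u = v ∨ ∃ v₀ : V, mdeg G v₀ = 2 ∧
      u ∈ insert v₀ (G.neighborSet v₀) ∧ v ∈ insert v₀ (G.neighborSet v₀))) ∧
  (∀ x y : W, H.Adj x y ↔ (x ≠ y ∧ ∃ u v : V, G.Adj u v ∧ f u = x ∧ f v = y))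

/-- The retract obtained via `f` is a simple graph, i.e. no two distinct edges of `G`
become parallel after the bicontractions. -/
def RetractMapSimple {V W : Type*} (G : SimpleGraph V) (f : V → W) : Prop :=
  ∀ e₁ ∈ G.edgeSet, ∀ e₂ ∈ G.edgeSet,
    Sym2.map f e₁ = Sym2.map f e₂ → ¬ (Sym2.map f e₁).IsDiag → e₁ = e₂

/-- An edge `e` of a brace `G` is thin if the retract of `G − e` is also a brace. -/
def IsThinEdge {V : Type*} (G : SimpleGraph V) (e : Sym2 V) : Prop :=
  e ∈ G.edgeSet ∧ ∃ (sH : Set V) (H : SimpleGraph sH) (f : V → sH),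
    IsRetractMap (G.deleteEdges {e}) H f ∧ IsBrace H

/-- `e` is a strictly thin edge of `G`, with retract `H` realized by the map `f`:
the retract of `G − e` is a brace and is simple. -/
def IsStrictlyThinVia {V W : Type*} (G : SimpleGraph V) (e : Sym2 V)
    (H : SimpleGraph W) (f : V → W) : Prop :=
  e ∈ G.edgeSet ∧ IsRetractMap (G.deleteEdges {e}) H f ∧ IsBrace H ∧
    RetractMapSimple (G.deleteEdges {e}) f

/-- `e` is a strictly thin edge of the simple brace `G`. -/
def IsStrictlyThinEdge {V : Type*} (G : SimpleGraph V) (e : Sym2 V) : Prop :=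
  ∃ (sH : Set V) (H : SimpleGraph sH) (f : V → sH), IsStrictlyThinVia G e H f

/-- The index of a (strictly thin) edge `e`, computed from `G' = G − e`:
the number of vertices of degree two in `G'`. -/
noncomputable def thinIndex {V : Type*} (G' : SimpleGraph V) : ℕ :=
  {v : V | mdeg G' v = 2}.ncard

/-- An inner vertex of `G' = G − e`: a vertex of degree two. -/
def IsInnerVertex {V : Type*} (G' : SimpleGraph V) (v : V) : Prop := mdeg G' v = 2

/-- An outer vertex of `G' = G − e`: a neighbor of an inner vertex. -/
def IsOuterVertex {V : Type*} (G' : SimpleGraph V) (v : V) : Prop :=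
  ∃ u : V, IsInnerVertex G' u ∧ G'.Adj u v

/-- `(e, F)` is a minimality-preserving pair of the minimal brace `G`, where the
retract `H` of `G − e` is realized by `f`: the edge `e` is strictly thin and
`H − F` is a minimal brace. -/
def IsMPPVia {V W : Type*} (G : SimpleGraph V) (H : SimpleGraph W) (f : V → W)
    (e : Sym2 V) (F : Set (Sym2 W)) : Prop :=
  IsMinimalBrace G ∧ IsStrictlyThinVia G e H f ∧ F ⊆ H.edgeSet ∧
    IsMinimalBrace (H.deleteEdges F)

/-! ### Stable extensions -/

/-- The `S`-extension of `J` with respect to `S = {a₁, a₂, b₁, b₂}`: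
two new vertices `a₀ = inr 0` and `b₀ = inr 1` and five new edges
`a₀b₁, a₀b₂, b₀a₁, b₀a₂, a₀b₀`. -/
def stableExtGraph {U : Type*} (J : SimpleGraph U) (a₁ a₂ b₁ b₂ : U) :
    SimpleGraph (U ⊕ Fin 2) :=
  SimpleGraph.fromRel (fun x y =>
    match x, y with
    | Sum.inl u, Sum.inl v => J.Adj u v
    | Sum.inl u, Sum.inr k => (k = 0 ∧ (u = b₁ ∨ u = b₂)) ∨ (k = 1 ∧ (u = a₁ ∨ u = a₂))
    | Sum.inr j, Sum.inr k => j ≠ k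
    | Sum.inr _, Sum.inl _ => False)

/-- `G` is (isomorphic to) a stable-extension of the connected bipartite graph `J`,
with respect to some stable set meeting each color class in exactly two vertices. -/
def IsStableExtensionOf {V U : Type*} (G : SimpleGraph V) (J : SimpleGraph U) : Prop :=
  ∃ (A B : Set U) (a₁ a₂ b₁ b₂ : U), J.Connected ∧ IsBipartition J A B ∧
    a₁ ∈ A ∧ a₂ ∈ A ∧ b₁ ∈ B ∧ b₂ ∈ B ∧ a₁ ≠ a₂ ∧ b₁ ≠ b₂ ∧
    ¬ J.Adj a₁ b₁ ∧ ¬ J.Adj a₁ b₂ ∧ ¬ J.Adj a₂ b₁ ∧ ¬ J.Adj a₂ b₂ ∧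
    Nonempty (G ≃g stableExtGraph J a₁ a₂ b₁ b₂)

/-! ### Concrete families of graphs -/

/-- The complete graph on two vertices. -/
def K2graph : SimpleGraph (Fin 2) := ⊤

/-- The cycle graph `Cₙ` on `ZMod n`. -/
def cycleGraph (n : ℕ) : SimpleGraph (ZMod n) :=
  SimpleGraph.fromRel (fun x y => x - y = 1)

/-- The Möbius ladder `M_{2m}`: the cycle `C_{2m}` plus the long chords. -/
def mobiusLadder (m : ℕ) : SimpleGraph (ZMod (2 * m)) :=
  SimpleGraph.fromRel (fun x y => x - y = 1 ∨ x - y = (m : ZMod (2 * m)))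

/-- The prism (ladder) over the cycle `Cₘ`. -/
def prismGraph (m : ℕ) : SimpleGraph (ZMod m × Bool) :=
  SimpleGraph.fromRel (fun p q => (p.2 = q.2 ∧ p.1 - q.1 = 1) ∨ (p.1 = q.1 ∧ p.2 ≠ q.2))

/-- The biwheel `B_{2m+2}`: the cycle `C_{2m}` plus two nonadjacent hubs, one joined to
all even rim vertices, the other to all odd rim vertices. `B_{2n} = biwheel (n-1)`. -/
def biwheel (m : ℕ) : SimpleGraph (ZMod (2 * m) ⊕ Fin 2) :=
  SimpleGraph.fromRel (fun x y =>
    match x, y with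
    | Sum.inl a, Sum.inl b => a - b = 1
    | Sum.inl a, Sum.inr k => (k = 0 ∧ Even a) ∨ (k = 1 ∧ ¬ Even a)
    | Sum.inr _, _ => False)

/-- The complete bipartite graph `K_{3,3}`. -/
def K33graph : SimpleGraph (Fin 3 ⊕ Fin 3) := completeBipartiteGraph (Fin 3) (Fin 3)

/-- The family `𝒢` : `K₂`, `C₄` and the McCuaig braces
(prisms, Möbius ladders and biwheels). -/
def InMcCuaigFamily {V : Type*} (G : SimpleGraph V) : Prop :=
  Nonempty (G ≃g K2graph) ∨ Nonempty (G ≃g cycleGraph 4) ∨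
  (∃ m : ℕ, 3 ≤ m ∧ Nonempty (G ≃g prismGraph m)) ∨
  (∃ m : ℕ, 3 ≤ m ∧ Nonempty (G ≃g mobiusLadder m)) ∨
  (∃ m : ℕ, 3 ≤ m ∧ Nonempty (G ≃g biwheel m))

/-- The graph `Q_{2n}` (for `n ≥ 5`): color classes `{0, …, n-1}` on each side; the
hubs `0, 1` of each side are joined to all vertices `2, …, n-1` of the other side,
and the vertices `2, …, n-1` form a perfect matching between the two sides.
`Qgraph 5 = Q₁₀`, `Qgraph 6 = Q₁₂`, and `Qgraph n = Q_{2n}` of the family `𝒬` for `n ≥ 6`. -/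
def Qgraph (n : ℕ) : SimpleGraph (Fin n ⊕ Fin n) :=
  SimpleGraph.fromRel (fun x y =>
    match x, y with
    | Sum.inl i, Sum.inr j =>
        ((i : ℕ) < 2 ∧ 2 ≤ (j : ℕ)) ∨ ((j : ℕ) < 2 ∧ 2 ≤ (i : ℕ)) ∨
          ((i : ℕ) = (j : ℕ) ∧ 2 ≤ (i : ℕ))
    | _, _ => False)

/-- `Q₁₀⁺`: the graph `Q₁₀` plus an edge joining two noncubic vertices that lie in
distinct color classes (and in distinct `K_{3,3}`-pieces of the tight cut
decomposition of `Q₁₀`). -/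
def Q10plus : SimpleGraph (Fin 5 ⊕ Fin 5) :=
  Qgraph 5 ⊔ SimpleGraph.fromEdgeSet {s((Sum.inl 0 : Fin 5 ⊕ Fin 5), (Sum.inr 0 : Fin 5 ⊕ Fin 5))}

/-- The bipartite complement of `G` with respect to the color classes `A`, `B`. -/
def bipComplement {V : Type*} (G : SimpleGraph V) (A B : Set V) : SimpleGraph V :=
  SimpleGraph.fromRel (fun u v => u ∈ A ∧ v ∈ B ∧ ¬ G.Adj u v)

/-! ### Bi-splitting and expansion operations -/

/-- `G` is obtained from `H` by bi-splitting the noncubic vertex `b` into `b₁ a₀ b₂`,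
as witnessed by the projection `f : W → V` (which sends `b₁, a₀, b₂` to `b` and is a
bijection elsewhere). The edges of `H` at `b` are distributed between `b₁` and `b₂`,
each receiving at least two, and `a₀` is a new vertex adjacent precisely to `b₁, b₂`. -/
def IsBisplitMap {V W : Type*} (H : SimpleGraph V) (b : V) (G : SimpleGraph W)
    (b₁ a₀ b₂ : W) (f : W → V) : Prop :=
  4 ≤ mdeg H b ∧
  Function.Surjective f ∧ f b₁ = b ∧ f a₀ = b ∧ f b₂ = b ∧
  b₁ ≠ b₂ ∧ a₀ ≠ b₁ ∧ a₀ ≠ b₂ ∧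
  (∀ u v : W, f u = f v → u = v ∨
      (u ∈ ({b₁, a₀, b₂} : Set W) ∧ v ∈ ({b₁, a₀, b₂} : Set W))) ∧
  G.neighborSet a₀ = {b₁, b₂} ∧
  3 ≤ mdeg G b₁ ∧ 3 ≤ mdeg G b₂ ∧ ¬ G.Adj b₁ b₂ ∧
  (∀ x : W, x ≠ a₀ → ¬ (G.Adj b₁ x ∧ G.Adj b₂ x)) ∧
  (∀ x y : V, H.Adj x y ↔ (x ≠ y ∧ ∃ u v : W, G.Adj u v ∧ f u = x ∧ f v = y))

/-- Expansion of index zero: adding an edge joining two nonadjacent vertices in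
distinct color classes. -/
def ExpansionZero {W V : Type*} (G : SimpleGraph W) (H : SimpleGraph V) : Prop :=
  ∃ (A B : Set V) (a b : V), IsBipartition H A B ∧ a ∈ A ∧ b ∈ B ∧ ¬ H.Adj a b ∧ a ≠ b ∧
    Nonempty (G ≃g (H ⊔ SimpleGraph.fromEdgeSet {s(a, b)}))

/-- Expansion of index one: `G = H{a → a₁b₀a₂} + b₀w`, where `a, w` are in the same
color class of `H` and `a` is noncubic. -/
def ExpansionOne {W V : Type*} (G : SimpleGraph W) (H : SimpleGraph V) : Prop :=
  ∃ (A B : Set V) (a w : V), IsBipartition H A B ∧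
    ((a ∈ A ∧ w ∈ A) ∨ (a ∈ B ∧ w ∈ B)) ∧ a ≠ w ∧ 4 ≤ mdeg H a ∧
    ∃ (G₁ : SimpleGraph W) (a₁ b₀ a₂ : W) (f : W → V) (w' : W),
      IsBisplitMap H a G₁ a₁ b₀ a₂ f ∧ f w' = w ∧
      G = G₁ ⊔ SimpleGraph.fromEdgeSet {s(b₀, w')}

/-- Expansion of index two: `G = H{a → a₁b₀a₂}{b → b₁a₀b₂} + a₀b₀`, where `a, b` are
noncubic vertices of `H` in distinct color classes. -/
def ExpansionTwo {W V : Type*} (G : SimpleGraph W) (H : SimpleGraph V) : Prop :=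
  ∃ (A B : Set V) (a b : V), IsBipartition H A B ∧ a ∈ A ∧ b ∈ B ∧
    4 ≤ mdeg H a ∧ 4 ≤ mdeg H b ∧
    ∃ (sm : Set W) (G₁ : SimpleGraph sm) (a₁ b₀ a₂ : sm) (g : sm → V),
      IsBisplitMap H a G₁ a₁ b₀ a₂ g ∧
      ∃ (b' : sm) (G₂ : SimpleGraph W) (b₁ a₀ b₂ : W) (f : W → sm) (b₀' : W),
        g b' = b ∧ IsBisplitMap G₁ b' G₂ b₁ a₀ b₂ f ∧ f b₀' = b₀ ∧
        G = G₂ ⊔ SimpleGraph.fromEdgeSet {s(a₀, b₀')}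

/-- `G` is obtained from `H` by an expansion operation (of index zero, one or two). -/
def IsExpansionOf {W V : Type*} (G : SimpleGraph W) (H : SimpleGraph V) : Prop :=
  ExpansionZero G H ∨ ExpansionOne G H ∨ ExpansionTwo G H

/-! ### Narrow minimality-preserving pairs -/

/-- The properties of `F` (viewed in `G − e` via the retract map `fm`) required by the
Main Theorem: (i) if `index(e) = 1` then some outer vertex `v` has `F ⊆ ∂(v)`;
(ii) if `index(e) = 2` then some adjacent outer vertices `u, w` have `F ⊆ ∂({u,w})`;
(iii) for each `f ∈ F`, an end of `f` is cubic iff it is an outer vertex. -/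
def NarrowProps {V W : Type*} (G : SimpleGraph V) (fm : V → W) (e : Sym2 V)
    (F : Set (Sym2 W)) : Prop :=
  (thinIndex (G.deleteEdges {e}) = 1 →
      ∃ v : V, IsOuterVertex (G.deleteEdges {e}) v ∧
        ∀ g ∈ (G.deleteEdges {e}).edgeSet, Sym2.map fm g ∈ F → v ∈ g) ∧
  (thinIndex (G.deleteEdges {e}) = 2 →
      ∃ u w : V, IsOuterVertex (G.deleteEdges {e}) u ∧ IsOuterVertex (G.deleteEdges {e}) w ∧
        (G.deleteEdges {e}).Adj u w ∧
        ∀ g ∈ (G.deleteEdges {e}).edgeSet, Sym2.map fm g ∈ F →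
          ((u ∈ g ∧ w ∉ g) ∨ (w ∈ g ∧ u ∉ g))) ∧
  (∀ g ∈ (G.deleteEdges {e}).edgeSet, Sym2.map fm g ∈ F →
      ∀ x : V, x ∈ g → (mdeg G x = 3 ↔ IsOuterVertex (G.deleteEdges {e}) x))

/-- A narrow minimality-preserving pair, as in the Main Theorem. -/
def IsNarrowMPP {V W : Type*} (G : SimpleGraph V) (H : SimpleGraph W) (fm : V → W)
    (e : Sym2 V) (F : Set (Sym2 W)) : Prop :=
  IsMPPVia G H fm e F ∧
  (F = ∅ ∨ NarrowProps G fm e F) ∧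
  F.ncard ≤ thinIndex (G.deleteEdges {e}) + 1 ∧
  (thinIndex (G.deleteEdges {e}) = 1 ∧ F.ncard = 2 →
    IsStableExtensionOf G (H.deleteEdges F))

/-!
Every minimal brace has a perfect matching, so on at most eight vertices it is bipartite with
classes of equal size `k ≤ 4`.  In a brace on more than four vertices a vertex `v` of degree two
would make `{v} ∪ N(v)` a nontrivial tight cut, so the minimum degree is at least `min k 3`; for
`k ≤ 3` the graph is therefore complete bipartite (`K₂`, `C₄ = K_{2,2}`, `K_{3,3}`).  For `k = 4`
a vertex of degree four forces, by double counting, one of degree four on the other side, and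
deleting the edge joining them leaves a bipartite graph of minimum degree three on `4 + 4`
vertices, which is still a brace.  So a minimal brace with `k = 4` is cubic, i.e. `K_{4,4}` minus a
perfect matching, which is the cube.

Conversely, a balanced bipartite graph of minimum degree `δ` with `k < 2δ` is connected and, by
Hall's theorem, every edge extends to a perfect matching.  Tight cuts have shores of odd size, so
on at most eight vertices a nontrivial one has a shore of size three, which a perfect matching
through a suitable edge crosses twice as soon as `δ ≥ 3`.  Deleting an edge of one of the four
regular graphs creates a vertex of degree too small for a brace, whence minimality.
-/

namespace IsBipartition

variable {V : Type*} {G : SimpleGraph V} {A B : Set V}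

lemma symm (h : IsBipartition G A B) : IsBipartition G B A :=
  ⟨by rw [Set.union_comm, h.1], by rw [Set.inter_comm, h.2.1], fun u v huv => (h.2.2 u v huv).symm⟩

lemma isBipartiteWith (h : IsBipartition G A B) : G.IsBipartiteWith A B :=
  ⟨Set.disjoint_iff_inter_eq_empty.2 h.2.1, h.2.2⟩

lemma mem_or_mem (h : IsBipartition G A B) (v : V) : v ∈ A ∨ v ∈ B := by
  simp [← Set.mem_union, h.1]

lemma not_adj (h : IsBipartition G A B) {u v : V} (hu : u ∈ A) (hv : v ∈ A) : ¬ G.Adj u v :=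
  fun huv =>
    h.isBipartiteWith.disjoint.notMem_of_mem_left hv (h.isBipartiteWith.mem_of_mem_adj hu huv)

lemma deleteEdges (h : IsBipartition G A B) (s : Set (Sym2 V)) :
    IsBipartition (G.deleteEdges s) A B :=
  ⟨h.1, h.2.1, fun u v huv => h.2.2 u v huv.1⟩

lemma ncard_add_ncard [Finite V] (h : IsBipartition G A B) : A.ncard + B.ncard = Nat.card V := by
  rw [← Set.ncard_union_eq h.isBipartiteWith.disjoint, h.1, Set.ncard_univ]

lemma mdeg_le [Finite V] (h : IsBipartition G A B) {a : V} (ha : a ∈ A) : mdeg G a ≤ B.ncard :=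
  Set.ncard_le_ncard (isBipartiteWith_neighborSet_subset h.isBipartiteWith ha)

lemma adj_of_ncard_le_mdeg [Finite V] (h : IsBipartition G A B) {a b : V} (ha : a ∈ A)
    (hb : b ∈ B) (hdeg : B.ncard ≤ mdeg G a) : G.Adj a b := by
  have hN : G.neighborSet a = B :=
    Set.eq_of_subset_of_ncard_le (isBipartiteWith_neighborSet_subset h.isBipartiteWith ha) hdeg
  rwa [← hN] at hb

lemma ncard_inter_add_ncard_inter [Finite V] (h : IsBipartition G A B)
    (X : Set V) : (X ∩ A).ncard + (X ∩ B).ncard = X.ncard := by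
  rw [← Set.ncard_union_eq (h.isBipartiteWith.disjoint.mono Set.inter_subset_right
    Set.inter_subset_right), ← Set.inter_union_distrib_left, h.1, Set.inter_univ]

end IsBipartition

section Degree

variable {V : Type*} {G : SimpleGraph V}

lemma mdeg_eq_degree [Fintype V] [DecidableRel G.Adj] (v : V) : mdeg G v = G.degree v := by
  rw [mdeg, Set.ncard_eq_toFinset_card', Set.toFinset_card, card_neighborSet_eq_degree]

lemma mdeg_iso {W : Type*} {H : SimpleGraph W} (f : G ≃g H) (v : V) :
    mdeg H (f v) = mdeg G v := by
  rw [mdeg, mdeg, ← f.image_neighborSet, Set.ncard_image_of_injective _ f.injective]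

lemma mdeg_deleteEdges_of_ne {a b v : V} (ha : v ≠ a) (hb : v ≠ b) :
    mdeg (G.deleteEdges {s(a, b)}) v = mdeg G v := by
  unfold mdeg
  congr 1
  ext w
  simp [ha, hb]

lemma mdeg_deleteEdges_add_one [Finite V] {a b : V} (hab : G.Adj a b) :
    mdeg (G.deleteEdges {s(a, b)}) a + 1 = mdeg G a := by
  have hN : (G.deleteEdges {s(a, b)}).neighborSet a = G.neighborSet a \ {b} := by
    ext w
    simp [hab.ne, eq_comm]
  rw [mdeg, mdeg, hN]
  exact Set.ncard_sdiff_singleton_add_one (show b ∈ G.neighborSet a from hab)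

end Degree

section PerfectMatching

variable {V : Type*} {G : SimpleGraph V} {A B : Set V}

lemma IsMatchingCovered.exists_isPerfectMatching (h : IsMatchingCovered G) :
    ∃ M : G.Subgraph, M.IsPerfectMatching :=
  let ⟨M, hM, _⟩ := h.2.2 _ h.2.1.some_mem
  ⟨M, hM⟩

lemma ncard_le_ncard_of_isPerfectMatching [Finite V] (hbip : IsBipartition G A B)
    {M : G.Subgraph} (hM : M.IsPerfectMatching) : A.ncard ≤ B.ncard := by
  choose p hp using fun v => (hM.1 (hM.2 v)).exists
  refine Set.ncard_le_ncard_of_injOn p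
    (fun a ha => hbip.isBipartiteWith.mem_of_mem_adj ha (M.adj_sub (hp a))) ?_
  intro a _ a' _ h
  exact hM.1.eq_of_adj_right (hp a) (h ▸ hp a')

lemma ncard_eq_ncard_of_isPerfectMatching [Finite V] (hbip : IsBipartition G A B)
    {M : G.Subgraph} (hM : M.IsPerfectMatching) : A.ncard = B.ncard :=
  (ncard_le_ncard_of_isPerfectMatching hbip hM).antisymm
    (ncard_le_ncard_of_isPerfectMatching hbip.symm hM)

lemma exists_equiv_of_two_mul_le {α β : Type*} [Fintype α] [Fintype β] (r : α → β → Prop)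
    [DecidableRel r] {n d : ℕ} (hα : Fintype.card α = n) (hβ : Fintype.card β = n)
    (hnd : n ≤ 2 * d) (hl : ∀ x, d ≤ (Finset.univ.filter (r x)).card)
    (hr : ∀ y, d ≤ (Finset.univ.filter (r · y)).card) :
    ∃ f : α ≃ β, ∀ x, r x (f x) := by
  classical
  suffices hall : ∀ s : Finset α, s.card ≤ (Finset.univ.filter fun y => ∃ x ∈ s, r x y).card by
    obtain ⟨f, hf, hrf⟩ := (Fintype.all_card_le_filter_rel_iff_exists_injective r).1 hall
    exact ⟨Equiv.ofBijective f ((Fintype.bijective_iff_injective_and_card f).2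
      ⟨hf, hα.trans hβ.symm⟩), hrf⟩
  intro s
  by_cases hs : s.card ≤ d
  · obtain rfl | ⟨x, hx⟩ := s.eq_empty_or_nonempty
    · simp
    refine hs.trans ((hl x).trans (Finset.card_le_card fun y hy => ?_))
    simp only [Finset.mem_filter, Finset.mem_univ, true_and] at hy ⊢
    exact ⟨x, hx, hy⟩
  · -- every `y` has more than `n - s.card` partners, so one of them lies in `s`
    have hall : ∀ y, ∃ x ∈ s, r x y := by
      intro y
      by_contra! hy
      have hsub : Finset.univ.filter (r · y) ⊆ sᶜ := fun x hx =>
        Finset.mem_compl.2 fun hxs => hy x hxs (Finset.mem_filter.1 hx).2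
      have := (hr y).trans (Finset.card_le_card hsub)
      have hsn := Finset.card_le_univ s
      rw [Finset.card_compl, hα] at this
      omega
    rw [Finset.filter_true_of_mem fun y _ => hall y, Finset.card_univ, hβ, ← hα]
    exact Finset.card_le_univ s

end PerfectMatching

section DenseBipartite

variable {V : Type*} {G : SimpleGraph V} {A B : Set V} {k d : ℕ}

lemma exists_isPerfectMatching_of_equiv (hbip : IsBipartition G A B) {a b : V} (ha : a ∈ A)
    (hb : b ∈ B) (hab : G.Adj a b) (f : ↥(A \ {a}) ≃ ↥(B \ {b}))
    (hf : ∀ x : ↥(A \ {a}), G.Adj x (f x)) :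
    ∃ M : G.Subgraph, M.IsPerfectMatching ∧ s(a, b) ∈ M.edgeSet := by
  have hAB := hbip.isBipartiteWith.disjoint
  obtain ⟨M, hMverts, hM⟩ := Subgraph.IsMatching.exists_of_disjoint_sets_of_equiv
    (hAB.mono Set.sdiff_subset Set.sdiff_subset) f hf
  refine ⟨G.subgraphOfAdj hab ⊔ M, ⟨(Subgraph.IsMatching.subgraphOfAdj hab).sup hM ?_, ?_⟩,
    Subgraph.mem_edgeSet.2 (Or.inl (by simp))⟩
  · rw [support_subgraphOfAdj, hM.support_eq_verts, hMverts, Set.disjoint_left]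
    rintro v (rfl | rfl) (⟨hv, hv'⟩ | ⟨hv, hv'⟩)
    · exact hv' rfl
    · exact hAB.notMem_of_mem_left ha hv
    · exact hAB.notMem_of_mem_right hb hv
    · exact hv' rfl
  · rw [Subgraph.isSpanning_iff, Subgraph.verts_sup, hMverts, Set.eq_univ_iff_forall]
    intro v
    rcases hbip.mem_or_mem v with hv | hv
    · by_cases hva : v = a <;> simp [hva, hv]
    · by_cases hvb : v = b <;> simp [hvb, hv]

lemma pred_mdeg_le_card_filter_adj (hbip : IsBipartition G A B) {x : V} (hx : x ∈ A)
    (b : V) [Fintype ↥(B \ {b})] [DecidablePred (G.Adj x ·)] :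
    mdeg G x - 1 ≤ (Finset.univ.filter fun y : ↥(B \ {b}) => G.Adj x y).card := by
  rw [← Set.ncard_coe_finset, ← Set.ncard_image_of_injective _ Subtype.val_injective]
  refine (Set.pred_ncard_le_ncard_sdiff_singleton _ b).trans (Set.ncard_le_ncard ?_)
  rintro y ⟨hxy, hyb⟩
  exact ⟨⟨y, hbip.isBipartiteWith.mem_of_mem_adj hx hxy, hyb⟩, by simpa using hxy, rfl⟩

lemma exists_isPerfectMatching_mem_edgeSet [Finite V] (hbip : IsBipartition G A B)
    (hA : A.ncard = k) (hB : B.ncard = k) (hdeg : ∀ v, d ≤ mdeg G v) (hkd : k + 1 ≤ 2 * d)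
    {a b : V} (ha : a ∈ A) (hb : b ∈ B) (hab : G.Adj a b) :
    ∃ M : G.Subgraph, M.IsPerfectMatching ∧ s(a, b) ∈ M.edgeSet := by
  classical
  have := Fintype.ofFinite V
  have hcard : ∀ {S : Set V} {s : V}, s ∈ S → S.ncard = k → Fintype.card ↥(S \ {s}) = k - 1 :=
    fun hs hS => by
      rw [← Nat.card_eq_fintype_card, Nat.card_coe_set_eq, Set.ncard_sdiff_singleton_of_mem hs, hS]
  obtain ⟨f, hf⟩ := exists_equiv_of_two_mul_le
    (fun (x : ↥(A \ {a})) (y : ↥(B \ {b})) => G.Adj x y) (hcard ha hA) (hcard hb hB)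
    (d := d - 1) (by omega)
    (fun x => (Nat.sub_le_sub_right (hdeg x) 1).trans
      (pred_mdeg_le_card_filter_adj hbip x.2.1 b))
    (fun y => by
      simp_rw [G.adj_comm _ (y : V)]
      exact (Nat.sub_le_sub_right (hdeg y) 1).trans
        (pred_mdeg_le_card_filter_adj hbip.symm y.2.1 a))
  exact exists_isPerfectMatching_of_equiv hbip ha hb hab f hf

lemma reachable_of_mem_of_mem [Finite V] (hbip : IsBipartition G A B) (hB : B.ncard = k)
    (hdeg : ∀ v, d ≤ mdeg G v) (hkd : k < 2 * d) {u v : V} (hu : u ∈ A) (hv : v ∈ A) :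
    G.Reachable u v := by
  obtain ⟨w, hwu, hwv⟩ : (G.neighborSet u ∩ G.neighborSet v).Nonempty := by
    rw [← Set.ncard_pos]
    have hunion := Set.ncard_le_ncard (Set.union_subset
      (isBipartiteWith_neighborSet_subset hbip.isBipartiteWith hu)
      (isBipartiteWith_neighborSet_subset hbip.isBipartiteWith hv))
    have := Set.ncard_union_add_ncard_inter (G.neighborSet u) (G.neighborSet v)
    have := hdeg u
    have := hdeg v
    unfold mdeg at *
    omega
  exact (Adj.reachable hwu).trans (Adj.reachable hwv).symm

lemma reachable_of_mem [Finite V] (hbip : IsBipartition G A B)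
    (hB : B.ncard = k) (hdeg : ∀ v, d ≤ mdeg G v) (hkd : k < 2 * d) (u : V) {v : V}
    (hv : v ∈ A) : G.Reachable u v := by
  rcases hbip.mem_or_mem u with hu | hu
  · exact reachable_of_mem_of_mem hbip hB hdeg hkd hu hv
  · obtain ⟨w, huw⟩ : (G.neighborSet u).Nonempty := by
      rw [← Set.ncard_pos]
      have := hdeg u
      unfold mdeg at this
      omega
    exact (Adj.reachable huw).trans <| reachable_of_mem_of_mem hbip hB hdeg hkd
      (hbip.symm.isBipartiteWith.mem_of_mem_adj hu huw) hv

lemma connected_of_two_mul_mindeg [Finite V] (hbip : IsBipartition G A B) (hA : A.ncard = k)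
    (hB : B.ncard = k) (hk : 1 ≤ k) (hdeg : ∀ v, d ≤ mdeg G v) (hkd : k < 2 * d) :
    G.Connected := by
  obtain ⟨a, ha⟩ : A.Nonempty := by
    rw [← Set.ncard_pos]
    omega
  have : Nonempty V := ⟨a⟩
  refine ⟨fun u v => ?_⟩
  rcases hbip.mem_or_mem v with hv | hv
  · exact reachable_of_mem hbip hB hdeg hkd u hv
  · exact reachable_of_mem hbip.symm hA hdeg hkd u hv

lemma isMatchingCovered_of_two_mul_mindeg [Finite V] (hbip : IsBipartition G A B)
    (hA : A.ncard = k) (hB : B.ncard = k) (hk : 1 ≤ k) (hdeg : ∀ v, d ≤ mdeg G v)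
    (hkd : k + 1 ≤ 2 * d) : IsMatchingCovered G := by
  have hconn := connected_of_two_mul_mindeg hbip hA hB hk hdeg hkd
  obtain ⟨v⟩ := hconn.nonempty
  obtain ⟨w, hvw⟩ : (G.neighborSet v).Nonempty := by
    rw [← Set.ncard_pos]
    have := hdeg v
    unfold mdeg at this
    omega
  refine ⟨hconn, ⟨s(v, w), hvw⟩, fun e he => ?_⟩
  induction e using Sym2.ind with
  | _ x y =>
    rcases hbip.2.2 x y he with ⟨hx, hy⟩ | ⟨hx, hy⟩
    · exact exists_isPerfectMatching_mem_edgeSet hbip hA hB hdeg hkd hx hy he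
    · rw [Sym2.eq_swap]
      exact exists_isPerfectMatching_mem_edgeSet hbip hA hB hdeg hkd hy hx (G.adj_symm he)

end DenseBipartite

section TightCut

variable {V : Type*} {G : SimpleGraph V} {A B : Set V}

lemma cutEdges_compl (X : Set V) : cutEdges G Xᶜ = cutEdges G X := by
  ext e
  constructor
  · rintro ⟨he, u, v, rfl, hu, hv⟩
    exact ⟨he, v, u, Sym2.eq_swap, not_not.1 hv, hu⟩
  · rintro ⟨he, u, v, rfl, hu, hv⟩
    exact ⟨he, v, u, Sym2.eq_swap, hv, not_not.2 hu⟩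

lemma IsTightCut.compl {X : Set V} (hX : IsTightCut G X) : IsTightCut G Xᶜ := by
  intro M hM
  rw [cutEdges_compl]
  exact hX M hM

/-- Removing from `X` the end of the unique matching edge leaving `X` leaves a set that is
perfectly matched inside itself. -/
lemma IsTightCut.odd_ncard [Finite V] {X : Set V} (hX : IsTightCut G X) {M : G.Subgraph}
    (hM : M.IsPerfectMatching) : Odd X.ncard := by
  classical
  obtain ⟨e, he⟩ := Set.ncard_eq_one.1 (hX M hM)
  have he' : e ∈ M.edgeSet ∩ cutEdges G X := by rw [he]; rfl
  obtain ⟨hxy, -, x, y, rfl, hx, hy⟩ := he'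
  have hS : (M.induce (X \ {x})).IsMatching := by
    rintro v ⟨hvX, hvx⟩
    obtain ⟨w, hvw⟩ := (hM.1 (hM.2 v)).exists
    have hwX : w ∈ X := by
      by_contra hwX
      have hcut : s(v, w) ∈ M.edgeSet ∩ cutEdges G X :=
        ⟨hvw, M.adj_sub hvw, v, w, rfl, hvX, hwX⟩
      rw [he, Set.mem_singleton_iff, Sym2.eq_iff] at hcut
      rcases hcut with ⟨rfl, -⟩ | ⟨rfl, -⟩
      exacts [hvx rfl, hy hvX]
    have hwx : w ≠ x := by
      rintro rfl
      obtain rfl := hM.1.eq_of_adj_right hvw (M.adj_symm hxy)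
      exact hy hvX
    exact ⟨w, ⟨⟨hvX, hvx⟩, ⟨hwX, hwx⟩, hvw⟩, fun w' hw' => hM.1.eq_of_adj_left hw'.2.2 hvw⟩
  have := Fintype.ofFinite V
  have heven := hS.even_card
  rw [Subgraph.induce_verts, ← Set.ncard_eq_toFinset_card'] at heven
  rw [← Set.ncard_sdiff_singleton_add_one hx]
  exact heven.add_one

lemma isTightCut_of_neighborSet_eq_pair {x u w : V} (hN : G.neighborSet x = {u, w})
    (huw : u ≠ w) : IsTightCut G {x, u, w} := by
  intro M hM
  wlog hxu : M.Adj x u generalizing u w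
  · obtain ⟨p, hxp⟩ := (hM.1 (hM.2 x)).exists
    have hp : p ∈ G.neighborSet x := M.adj_sub hxp
    rw [hN] at hp
    rcases hp with rfl | rfl
    · exact absurd hxp hxu
    · rw [Set.pair_comm]
      exact this (by rw [hN, Set.pair_comm]) huw.symm hxp
  have hxw : x ≠ w := (show G.Adj x w by simp [← mem_neighborSet, hN]).ne
  obtain ⟨q, hwq⟩ := (hM.1 (hM.2 w)).exists
  rw [Set.ncard_eq_one]
  refine ⟨s(w, q), Set.eq_singleton_iff_unique_mem.2
    ⟨⟨hwq, M.adj_sub hwq, w, q, rfl, by simp, ?_⟩, ?_⟩⟩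
  · rintro (rfl | rfl | rfl)
    · exact huw (hM.1.eq_of_adj_right hxu.symm hwq)
    · exact hxw (hM.1.eq_of_adj_right hxu hwq)
    · exact (M.adj_sub hwq).ne rfl
  · rintro _ ⟨hpq, -, p, p', rfl, hp, hp'⟩
    rw [Subgraph.mem_edgeSet] at hpq
    rcases hp with rfl | rfl | rfl
    · exact absurd (hM.1.eq_of_adj_left hxu hpq ▸ by simp) hp'
    · exact absurd (hM.1.eq_of_adj_left hxu.symm hpq ▸ by simp) hp'
    · rw [hM.1.eq_of_adj_left hpq hwq]

lemma not_isTightCut_of_adj_of_adj {X : Set V} {M : G.Subgraph} (hM : M.IsPerfectMatching)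
    {x₁ x₂ y₁ y₂ : V} (hx : x₁ ≠ x₂) (hx₁ : x₁ ∈ X) (hx₂ : x₂ ∈ X) (hy₁ : y₁ ∉ X)
    (hy₂ : y₂ ∉ X) (h₁ : M.Adj x₁ y₁) (h₂ : M.Adj x₂ y₂) : ¬ IsTightCut G X := by
  intro hX
  obtain ⟨e, he⟩ := Set.ncard_eq_one.1 (hX M hM)
  have he₁ : s(x₁, y₁) ∈ M.edgeSet ∩ cutEdges G X := ⟨h₁, M.adj_sub h₁, _, _, rfl, hx₁, hy₁⟩
  have he₂ : s(x₂, y₂) ∈ M.edgeSet ∩ cutEdges G X := ⟨h₂, M.adj_sub h₂, _, _, rfl, hx₂, hy₂⟩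
  rw [he, Set.mem_singleton_iff] at he₁ he₂
  rcases Sym2.eq_iff.1 (he₁.trans he₂.symm) with ⟨h, -⟩ | ⟨h, -⟩
  exacts [hx h, hy₂ (h ▸ hx₁)]

lemma not_isTightCut_of_ncard_eq_three [Finite V] (hbip : IsBipartition G A B)
    (hMC : IsMatchingCovered G) (hdeg : ∀ v, 3 ≤ mdeg G v) {X : Set V} (hX : X.ncard = 3) :
    ¬ IsTightCut G X := by
  have hsplit := hbip.ncard_inter_add_ncard_inter X
  wlog hXB : (X ∩ B).ncard ≤ 1 generalizing A B
  · exact this hbip.symm (by rw [add_comm, hsplit]) (by omega)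
  obtain ⟨a₁, ⟨ha₁X, ha₁A⟩, a₂, ⟨ha₂X, ha₂A⟩, ha₁₂⟩ :=
    (Set.one_lt_ncard).1 (by omega : 1 < (X ∩ A).ncard)
  have hW := hbip.isBipartiteWith
  rcases Nat.le_one_iff_eq_zero_or_eq_one.1 hXB with hXB | hXB
  · -- both `a₁` and `a₂` are matched outside `X`
    obtain ⟨M, hM⟩ := hMC.exists_isPerfectMatching
    have hout : ∀ {a p}, a ∈ A → M.Adj a p → p ∉ X := fun ha hap hpX =>
      ((Set.ncard_eq_zero (s := X ∩ B)).1 hXB).subset ⟨hpX, hW.mem_of_mem_adj ha (M.adj_sub hap)⟩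
    obtain ⟨p₁, hp₁⟩ := (hM.1 (hM.2 a₁)).exists
    obtain ⟨p₂, hp₂⟩ := (hM.1 (hM.2 a₂)).exists
    exact not_isTightCut_of_adj_of_adj hM ha₁₂ ha₁X ha₂X (hout ha₁A hp₁) (hout ha₂A hp₂) hp₁ hp₂
  · -- the vertex `b` of `X ∩ B` has a neighbour `a₃` outside `X`; match `b` to it
    obtain ⟨b, hb⟩ := Set.ncard_eq_one.1 hXB
    have hbXB : b ∈ X ∩ B := hb ▸ rfl
    obtain ⟨a₃, hba₃, ha₃X⟩ : ∃ a₃, G.Adj b a₃ ∧ a₃ ∉ X := by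
      by_contra! hin
      have hsub : G.neighborSet b ⊆ X ∩ A := fun v hv =>
        ⟨hin v hv, hW.mem_of_mem_adj' hbXB.2 (G.adj_symm hv)⟩
      have := Set.ncard_le_ncard hsub
      have := hdeg b
      unfold mdeg at *
      omega
    obtain ⟨M, hM, hMba₃⟩ := hMC.2.2 s(b, a₃) hba₃
    obtain ⟨p, hp⟩ := (hM.1 (hM.2 a₁)).exists
    have hpX : p ∉ X := by
      intro hpX
      have hpb : p = b := by
        rw [← Set.mem_singleton_iff, ← hb]
        exact ⟨hpX, hW.mem_of_mem_adj ha₁A (M.adj_sub hp)⟩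
      subst hpb
      obtain rfl : a₃ = a₁ := hM.1.eq_of_adj_left hMba₃ (M.adj_symm hp)
      exact ha₃X ha₁X
    have hba₁ : b ≠ a₁ := by
      rintro rfl
      exact hW.disjoint.notMem_of_mem_left ha₁A hbXB.2
    exact not_isTightCut_of_adj_of_adj hM hba₁ hbXB.1 ha₁X ha₃X hpX hMba₃ hp

lemma isTrivialShore_of_isTightCut [Finite V] (hbip : IsBipartition G A B)
    (hMC : IsMatchingCovered G)
    (hsmall : Nat.card V ≤ 4 ∨ Nat.card V ≤ 8 ∧ ∀ v, 3 ≤ mdeg G v) {X : Set V}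
    (hX : IsTightCut G X) : IsTrivialShore X := by
  obtain ⟨M, hM⟩ := hMC.exists_isPerfectMatching
  obtain ⟨i, hi⟩ := hX.odd_ncard hM
  obtain ⟨j, hj⟩ := hX.compl.odd_ncard hM
  have hsum := Set.ncard_add_ncard_compl X
  by_cases h₁ : X.ncard = 1
  · exact Or.inl (Set.ncard_eq_one.1 h₁)
  by_cases h₂ : Xᶜ.ncard = 1
  · exact Or.inr (Set.ncard_eq_one.1 h₂)
  rcases hsmall with hV | ⟨hV, hdeg⟩
  · omega
  · rcases (by omega : X.ncard = 3 ∨ Xᶜ.ncard = 3) with h₃ | h₃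
    · exact absurd hX (not_isTightCut_of_ncard_eq_three hbip hMC hdeg h₃)
    · exact absurd hX.compl (not_isTightCut_of_ncard_eq_three hbip hMC hdeg h₃)

end TightCut

section MinDegree

variable {V : Type*} {G : SimpleGraph V}

lemma IsMatchingCovered.one_le_mdeg [Finite V] (h : IsMatchingCovered G) (v : V) :
    1 ≤ mdeg G v := by
  obtain ⟨M, hM⟩ := h.exists_isPerfectMatching
  obtain ⟨w, hvw⟩ := (hM.1 (hM.2 v)).exists
  exact (Set.ncard_pos).2 ⟨w, M.adj_sub hvw⟩

/-- A vertex `v` of degree one, matched to `u`, forces every edge at `u` to be `uv`,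
so `{u, v}` would be a connected component. -/
lemma IsMatchingCovered.two_le_mdeg [Finite V] (h : IsMatchingCovered G) (hV : 3 ≤ Nat.card V)
    (v : V) : 2 ≤ mdeg G v := by
  by_contra! hv
  obtain ⟨M, hM⟩ := h.exists_isPerfectMatching
  obtain ⟨u, hvu⟩ := (hM.1 (hM.2 v)).exists
  have hv₁ : (G.neighborSet v).ncard ≤ 1 := by
    unfold mdeg at hv
    omega
  have hNv : G.neighborSet v = {u} :=
    (Set.eq_of_subset_of_ncard_le (Set.singleton_subset_iff.2 (M.adj_sub hvu))
      (by rwa [Set.ncard_singleton])).symm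
  have hNu : ∀ w, G.Adj u w → w = v := by
    intro w huw
    obtain ⟨M', hM', huwM'⟩ := h.2.2 s(u, w) huw
    obtain ⟨x, hvx⟩ := (hM'.1 (hM'.2 v)).exists
    have hx : x ∈ G.neighborSet v := M'.adj_sub hvx
    rw [hNv, Set.mem_singleton_iff] at hx
    subst hx
    exact hM'.1.eq_of_adj_left huwM' (M'.adj_symm hvx)
  obtain ⟨z, hz⟩ : ∃ z, z ∉ ({v, u} : Set V) := by
    by_contra! hall
    have := Set.ncard_le_ncard (fun z _ => hall z : (Set.univ : Set V) ⊆ {v, u})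
    rw [Set.ncard_univ] at this
    have := Set.ncard_insert_le v {u}
    rw [Set.ncard_singleton] at this
    omega
  obtain ⟨p⟩ := h.1.preconnected v z
  obtain ⟨d, -, hd₁, hd₂⟩ := p.exists_boundary_dart {v, u} (by simp) hz
  rcases hd₁ with hd | hd
  · have hd' : d.snd ∈ G.neighborSet v := hd ▸ d.adj
    rw [hNv] at hd'
    exact hd₂ (Or.inr hd')
  · exact hd₂ (Or.inl (hNu _ (hd ▸ d.adj)))

lemma IsBrace.three_le_mdeg [Finite V] (h : IsBrace G) (hV : 5 ≤ Nat.card V) (v : V) :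
    3 ≤ mdeg G v := by
  obtain ⟨-, hMC, htriv⟩ := h
  by_contra! hv
  have h₂ := hMC.two_le_mdeg (by omega) v
  obtain ⟨u, w, huw, hN⟩ := Set.ncard_eq_two.1 (by unfold mdeg at *; omega :
    (G.neighborSet v).ncard = 2)
  have hvu : v ≠ u := (show G.Adj v u by simp [← mem_neighborSet, hN]).ne
  have hvw : v ≠ w := (show G.Adj v w by simp [← mem_neighborSet, hN]).ne
  have h₃ : ({v, u, w} : Set V).ncard = 3 := Set.ncard_eq_three.2 ⟨v, u, w, hvu, hvw, huw, rfl⟩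
  have hsum := Set.ncard_add_ncard_compl ({v, u, w} : Set V)
  rcases htriv _ (isTightCut_of_neighborSet_eq_pair hN huw) with ⟨x, hx⟩ | ⟨x, hx⟩
  · rw [hx, Set.ncard_singleton] at h₃
    omega
  · rw [hx, Set.ncard_singleton] at hsum
    omega

lemma IsBrace.le_mdeg [Finite V] (h : IsBrace G) {d : ℕ} (hd : d ≤ 3)
    (hdV : 2 * d ≤ Nat.card V + 1) (v : V) : d ≤ mdeg G v := by
  interval_cases d
  · exact Nat.zero_le _
  · exact h.2.1.one_le_mdeg v
  · exact h.2.1.two_le_mdeg (by omega) v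
  · exact h.three_le_mdeg (by omega) v

lemma not_isBrace_deleteEdges [Finite V] {d : ℕ} (hd : d ≤ 3) (hdV : 2 * d ≤ Nat.card V + 1)
    (hdeg : ∀ v, mdeg G v = d) {e : Sym2 V} (he : e ∈ G.edgeSet) :
    ¬ IsBrace (G.deleteEdges {e}) := by
  induction e using Sym2.ind with
  | _ a b =>
    intro hbr
    have hab : G.Adj a b := he
    have := mdeg_deleteEdges_add_one hab
    have := hbr.le_mdeg hd hdV a
    have := hdeg a
    omega

end MinDegree

section Brace

variable {V : Type*} {G : SimpleGraph V} {A B : Set V} {k d : ℕ}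

theorem isBrace_of_mindeg [Finite V] (hbip : IsBipartition G A B) (hA : A.ncard = k)
    (hB : B.ncard = k) (hk : 1 ≤ k) (hdeg : ∀ v, d ≤ mdeg G v) (hkd : k + 1 ≤ 2 * d)
    (hsmall : k ≤ 2 ∨ k ≤ 4 ∧ 3 ≤ d) : IsBrace G := by
  have hMC := isMatchingCovered_of_two_mul_mindeg hbip hA hB hk hdeg hkd
  refine ⟨⟨A, B, hbip⟩, hMC, fun X hX => isTrivialShore_of_isTightCut hbip hMC ?_ hX⟩
  have := hbip.ncard_add_ncard
  rcases hsmall with h | ⟨h, h₃⟩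
  · exact Or.inl (by omega)
  · exact Or.inr ⟨by omega, fun v => h₃.trans (hdeg v)⟩

lemma exists_mem_mdeg_eq_of_mdeg_eq [Finite V] (hbip : IsBipartition G A B)
    (hA : A.ncard = d + 1) (hB : B.ncard = d + 1) (hdeg : ∀ v, d ≤ mdeg G v) {a : V}
    (ha : a ∈ A) (had : mdeg G a = d + 1) : ∃ b ∈ B, mdeg G b = d + 1 := by
  classical
  have := Fintype.ofFinite V
  have hsum := isBipartiteWith_sum_degrees_eq (s := A.toFinset) (t := B.toFinset)
    (by simpa using hbip.isBipartiteWith)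
  simp only [← mdeg_eq_degree] at hsum
  by_contra! hne
  have hBsum : ∑ b ∈ B.toFinset, mdeg G b ≤ B.toFinset.card • d :=
    Finset.sum_le_card_nsmul _ _ _ fun b hb => by
      have := hbip.symm.mdeg_le (Set.mem_toFinset.1 hb)
      have := hne b (Set.mem_toFinset.1 hb)
      omega
  have hAsum : (A.toFinset.erase a).card • d ≤ ∑ v ∈ A.toFinset.erase a, mdeg G v :=
    Finset.card_nsmul_le_sum _ _ _ fun v _ => hdeg v
  rw [← Finset.add_sum_erase _ _ (Set.mem_toFinset.2 ha), had] at hsum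
  rw [Set.ncard_eq_toFinset_card'] at hA hB
  rw [Finset.card_erase_of_mem (Set.mem_toFinset.2 ha), hA, smul_eq_mul] at hAsum
  rw [hB, smul_eq_mul] at hBsum
  simp only [add_tsub_cancel_right] at hAsum
  nlinarith

lemma exists_isBrace_deleteEdges [Finite V] (hbip : IsBipartition G A B) (hA : A.ncard = 4)
    (hB : B.ncard = 4) (hdeg : ∀ v, 3 ≤ mdeg G v) {a : V} (ha : a ∈ A) (ha₄ : mdeg G a = 4) :
    ∃ e ∈ G.edgeSet, IsBrace (G.deleteEdges {e}) := by
  obtain ⟨b, hb, hb₄⟩ := exists_mem_mdeg_eq_of_mdeg_eq hbip hA hB hdeg ha ha₄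
  have hab : G.Adj a b := hbip.adj_of_ncard_le_mdeg ha hb (by omega)
  refine ⟨s(a, b), hab, isBrace_of_mindeg (hbip.deleteEdges _) hA hB (by norm_num)
    (d := 3) (fun v => ?_) (by norm_num) (by norm_num)⟩
  by_cases hva : v = a
  · subst hva
    have := mdeg_deleteEdges_add_one hab
    omega
  by_cases hvb : v = b
  · subst hvb
    have := mdeg_deleteEdges_add_one hab.symm
    rw [Sym2.eq_swap] at this
    omega
  rw [mdeg_deleteEdges_of_ne hva hvb]
  exact hdeg v

end Brace

def IsRegularBipartite {V : Type*} (G : SimpleGraph V) (k d : ℕ) : Prop :=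
  ∃ A B : Set V, IsBipartition G A B ∧ A.ncard = k ∧ B.ncard = k ∧ ∀ v, mdeg G v = d

namespace IsRegularBipartite

variable {V W : Type*} {G : SimpleGraph V} {H : SimpleGraph W} {k d : ℕ}

lemma card_eq [Finite V] (h : IsRegularBipartite G k d) : Nat.card V = 2 * k := by
  obtain ⟨A, B, hbip, hA, hB, -⟩ := h
  rw [← hbip.ncard_add_ncard, hA, hB, two_mul]

lemma of_iso (f : G ≃g H) (h : IsRegularBipartite H k d) : IsRegularBipartite G k d := by
  obtain ⟨A, B, hbip, hA, hB, hdeg⟩ := h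
  have hpre : ∀ S : Set W, (f ⁻¹' S).ncard = S.ncard := fun S =>
    Set.ncard_preimage_of_injective_subset_range f.injective (by simp [f.surjective.range_eq])
  refine ⟨f ⁻¹' A, f ⁻¹' B, ⟨?_, ?_, fun u v huv => hbip.2.2 _ _ (f.map_adj_iff.2 huv)⟩,
    (hpre A).trans hA, (hpre B).trans hB, fun v => (mdeg_iso f v).symm.trans (hdeg _)⟩
  · rw [← Set.preimage_union, hbip.1, Set.preimage_univ]
  · rw [← Set.preimage_inter, hbip.2.1, Set.preimage_empty]

theorem isMinimalBrace [Finite V] (h : IsRegularBipartite G k d) (hk : 1 ≤ k) (hdk : d ≤ k)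
    (hkd : k + 1 ≤ 2 * d) (hsmall : k ≤ 2 ∨ k ≤ 4 ∧ d = 3) : IsMinimalBrace G := by
  have hV := h.card_eq
  obtain ⟨A, B, hbip, hA, hB, hdeg⟩ := h
  refine ⟨isBrace_of_mindeg hbip hA hB hk (fun v => (hdeg v).ge) hkd (by omega),
    fun e he => not_isBrace_deleteEdges (by omega) (by omega) hdeg he⟩

end IsRegularBipartite

theorem IsMinimalBrace.isRegularBipartite {V : Type*} [Finite V] {G : SimpleGraph V}
    (h : IsMinimalBrace G) (hV : Nat.card V ≤ 8) :
    IsRegularBipartite G 1 1 ∨ IsRegularBipartite G 2 2 ∨ IsRegularBipartite G 3 3 ∨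
      IsRegularBipartite G 4 3 := by
  obtain ⟨hbr, hmin⟩ := h
  obtain ⟨⟨A, B, hbip⟩, hMC, -⟩ := id hbr
  obtain ⟨M, hM⟩ := hMC.exists_isPerfectMatching
  have hAB := ncard_eq_ncard_of_isPerfectMatching hbip hM
  have hcard := hbip.ncard_add_ncard
  have hle : ∀ v, mdeg G v ≤ B.ncard := fun v =>
    (hbip.mem_or_mem v).elim hbip.mdeg_le fun hv => hAB ▸ hbip.symm.mdeg_le hv
  have hge : ∀ v, min B.ncard 3 ≤ mdeg G v := hbr.le_mdeg (min_le_right _ _) (by omega)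
  obtain ⟨v₀⟩ := hMC.1.nonempty
  have hk : 1 ≤ B.ncard := (hMC.one_le_mdeg v₀).trans (hle v₀)
  have hreg : ∀ {k d}, B.ncard = k → (∀ v, mdeg G v = d) → IsRegularBipartite G k d :=
    fun hk hdeg => ⟨A, B, hbip, hAB.trans hk, hk, hdeg⟩
  have hdeg : ∀ v, B.ncard ≤ 3 → mdeg G v = B.ncard := fun v _ => by
    have := hle v
    have := hge v
    omega
  rcases (by omega : B.ncard = 1 ∨ B.ncard = 2 ∨ B.ncard = 3 ∨ B.ncard = 4) with hk | hk | hk | hk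
  · exact Or.inl (hreg hk fun v => hk ▸ hdeg v (by omega))
  · exact Or.inr (Or.inl (hreg hk fun v => hk ▸ hdeg v (by omega)))
  · exact Or.inr (Or.inr (Or.inl (hreg hk fun v => hk ▸ hdeg v (by omega))))
  -- a vertex of degree four would give a superfluous edge
  refine Or.inr (Or.inr (Or.inr (hreg hk fun v => ?_)))
  have h₃ : ∀ v, 3 ≤ mdeg G v := fun v => by
    have := hge v
    omega
  refine (by have := hle v; have := h₃ v; omega : mdeg G v = 3 ∨ mdeg G v = 4).resolve_right
    fun hv₄ => ?_
  obtain ⟨e, he, hbr'⟩ := (hbip.mem_or_mem v).elim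
    (fun hv => exists_isBrace_deleteEdges hbip (hAB.trans hk) hk h₃ hv hv₄)
    (fun hv => exists_isBrace_deleteEdges hbip.symm hk (hAB.trans hk) h₃ hv hv₄)
  exact hmin e he hbr'

section Iso

variable {V W : Type*} {G : SimpleGraph V} {H : SimpleGraph W} {A B : Set V} {A' B' : Set W}
  {k d : ℕ}

lemma nonempty_iso_of_equiv (hG : IsBipartition G A B) (hH : IsBipartition H A' B')
    (eA : A ≃ A') (eB : B ≃ B') (hadj : ∀ (a : A) (b : B), G.Adj a b ↔ H.Adj (eA a) (eB b)) :
    Nonempty (G ≃g H) := by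
  classical
  have hcases : ∀ v, (∃ a : A, (a : V) = v) ∨ ∃ b : B, (b : V) = v := fun v =>
    (hG.mem_or_mem v).imp (fun h => ⟨⟨v, h⟩, rfl⟩) (fun h => ⟨⟨v, h⟩, rfl⟩)
  let f : V → W := fun v =>
    if h : v ∈ A then eA ⟨v, h⟩ else eB ⟨v, (hG.mem_or_mem v).resolve_left h⟩
  have hfA : ∀ a : A, f a = eA a := fun a => dif_pos a.2
  have hfB : ∀ b : B, f b = eB b := fun b =>
    dif_neg (hG.isBipartiteWith.disjoint.notMem_of_mem_right b.2)
  have hdisj := hH.isBipartiteWith.disjoint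
  have hf : Function.Bijective f := by
    refine ⟨fun u v huv => ?_, fun w => ?_⟩
    · rcases hcases u with ⟨a, rfl⟩ | ⟨b, rfl⟩ <;> rcases hcases v with ⟨a', rfl⟩ | ⟨b', rfl⟩ <;>
        simp only [hfA, hfB] at huv
      · rw [eA.injective (Subtype.ext huv)]
      · exact absurd (huv ▸ (eA a).2) (hdisj.notMem_of_mem_right (eB b').2)
      · exact absurd (huv ▸ (eB b).2) (hdisj.notMem_of_mem_left (eA a').2)
      · rw [eB.injective (Subtype.ext huv)]
    · rcases hH.mem_or_mem w with hw | hw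
      · exact ⟨eA.symm ⟨w, hw⟩, by rw [hfA, Equiv.apply_symm_apply]⟩
      · exact ⟨eB.symm ⟨w, hw⟩, by rw [hfB, Equiv.apply_symm_apply]⟩
  refine ⟨⟨Equiv.ofBijective f hf, fun {u v} => ?_⟩⟩
  simp only [Equiv.ofBijective_apply]
  rcases hcases u with ⟨a, rfl⟩ | ⟨b, rfl⟩ <;> rcases hcases v with ⟨a', rfl⟩ | ⟨b', rfl⟩ <;>
    simp only [hfA, hfB]
  · exact iff_of_false (hH.not_adj (eA a).2 (eA a').2) (hG.not_adj a.2 a'.2)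
  · exact (hadj a b').symm
  · rw [G.adj_comm, H.adj_comm]
    exact (hadj a' b).symm
  · exact iff_of_false (hH.symm.not_adj (eB b).2 (eB b').2) (hG.symm.not_adj b.2 b'.2)

lemma nonempty_equiv_of_ncard_eq [Finite V] [Finite W] {S : Set V} {T : Set W}
    (h : S.ncard = T.ncard) : Nonempty (S ≃ T) :=
  Finite.card_eq.1 (by rwa [Nat.card_coe_set_eq, Nat.card_coe_set_eq])

lemma existsUnique_not_adj [Finite V] (hbip : IsBipartition G A B) (hB : B.ncard = d + 1)
    {a : V} (ha : a ∈ A) (hdeg : mdeg G a = d) : ∃! b, b ∈ B ∧ ¬ G.Adj a b := by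
  have hN := isBipartiteWith_neighborSet_subset hbip.isBipartiteWith ha
  obtain ⟨b, hb⟩ := Set.ncard_eq_one.1 (by rw [Set.ncard_sdiff hN, hB]; unfold mdeg at hdeg; omega :
    (B \ G.neighborSet a).ncard = 1)
  have hmem : ∀ x, x ∈ B ∧ ¬ G.Adj a x ↔ x = b := fun x => by
    rw [← Set.mem_singleton_iff, ← hb]
    rfl
  exact ⟨b, (hmem b).2 rfl, fun x hx => (hmem x).1 hx⟩

lemma exists_equiv_not_adj [Finite V] (hbip : IsBipartition G A B) (hA : A.ncard = d + 1)
    (hB : B.ncard = d + 1) (hdeg : ∀ v, mdeg G v = d) :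
    ∃ μ : A ≃ B, ∀ (a : A) (b : B), G.Adj a b ↔ μ a ≠ b := by
  have hμ := fun a : A => existsUnique_not_adj hbip hB a.2 (hdeg a)
  have hν := fun b : B => existsUnique_not_adj hbip.symm hA b.2 (hdeg b)
  choose μ hμB hμadj using fun a => (hμ a).exists
  choose ν hνA hνadj using fun b => (hν b).exists
  refine ⟨{ toFun := fun a => ⟨μ a, hμB a⟩
            invFun := fun b => ⟨ν b, hνA b⟩
            left_inv := fun a => Subtype.ext ?_
            right_inv := fun b => Subtype.ext ?_ }, fun a b => ?_⟩
  · exact ((hν ⟨μ a, hμB a⟩).unique ⟨hνA _, hνadj _⟩ ⟨a.2, fun h => hμadj a h.symm⟩)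
  · exact ((hμ ⟨ν b, hνA b⟩).unique ⟨hμB _, hμadj _⟩ ⟨b.2, fun h => hνadj b h.symm⟩)
  · rw [Equiv.coe_fn_mk, Ne, Subtype.ext_iff]
    constructor
    · rintro hab hb
      rw [← hb] at hab
      exact hμadj a hab
    · intro hne
      by_contra hab
      exact hne ((hμ a).unique ⟨hμB a, hμadj a⟩ ⟨b.2, hab⟩)

namespace IsRegularBipartite

lemma nonempty_iso_of_complete [Finite V] [Finite W] (hG : IsRegularBipartite G k k)
    (hH : IsRegularBipartite H k k) : Nonempty (G ≃g H) := by
  obtain ⟨A, B, hbip, hA, hB, hdeg⟩ := hG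
  obtain ⟨A', B', hbip', hA', hB', hdeg'⟩ := hH
  obtain ⟨eA⟩ := nonempty_equiv_of_ncard_eq (hA.trans hA'.symm)
  obtain ⟨eB⟩ := nonempty_equiv_of_ncard_eq (hB.trans hB'.symm)
  refine nonempty_iso_of_equiv hbip hbip' eA eB fun a b => iff_of_true ?_ ?_
  · exact hbip.adj_of_ncard_le_mdeg a.2 b.2 (by rw [hB, hdeg])
  · exact hbip'.adj_of_ncard_le_mdeg (eA a).2 (eB b).2 (by rw [hB', hdeg'])

lemma nonempty_iso_of_succ [Finite V] [Finite W] (hG : IsRegularBipartite G (d + 1) d)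
    (hH : IsRegularBipartite H (d + 1) d) : Nonempty (G ≃g H) := by
  obtain ⟨A, B, hbip, hA, hB, hdeg⟩ := hG
  obtain ⟨A', B', hbip', hA', hB', hdeg'⟩ := hH
  obtain ⟨μ, hμ⟩ := exists_equiv_not_adj hbip hA hB hdeg
  obtain ⟨μ', hμ'⟩ := exists_equiv_not_adj hbip' hA' hB' hdeg'
  obtain ⟨eA⟩ := nonempty_equiv_of_ncard_eq (hA.trans hA'.symm)
  refine nonempty_iso_of_equiv hbip hbip' eA (μ.symm.trans (eA.trans μ')) fun a b => ?_
  rw [hμ, hμ', Equiv.trans_apply, Equiv.trans_apply, Ne, Ne, μ'.apply_eq_iff_eq,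
    eA.apply_eq_iff_eq, Equiv.eq_symm_apply]

theorem nonempty_iso_iff [Finite V] [Finite W] (hH : IsRegularBipartite H k d)
    (hkd : d = k ∨ k = d + 1) : Nonempty (G ≃g H) ↔ IsRegularBipartite G k d := by
  refine ⟨fun ⟨f⟩ => hH.of_iso f, fun hG => ?_⟩
  rcases hkd with rfl | rfl
  exacts [hG.nonempty_iso_of_complete hH, hG.nonempty_iso_of_succ hH]

end IsRegularBipartite

end Iso

lemma isRegularBipartite_of_coloring {V : Type*} [Fintype V] {G : SimpleGraph V}
    [DecidableRel G.Adj] {k d : ℕ} (c : V → Bool) (hc : ∀ u v, G.Adj u v → c u ≠ c v)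
    (hA : (Finset.univ.filter fun v => c v = true).card = k)
    (hB : (Finset.univ.filter fun v => c v = false).card = k) (hdeg : ∀ v, G.degree v = d) :
    IsRegularBipartite G k d := by
  refine ⟨{v | c v = true}, {v | c v = false}, ⟨?_, ?_, fun u v huv => ?_⟩, ?_, ?_,
    fun v => (mdeg_eq_degree v).trans (hdeg v)⟩
  · ext v
    simp
  · ext v
    simp
  · have := hc u v huv
    cases hu : c u <;> cases hv : c v <;> simp_all
  · rw [← hA, Set.ncard_eq_toFinset_card', Set.toFinset_ofPred]
  · rw [← hB, Set.ncard_eq_toFinset_card', Set.toFinset_ofPred]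

instance : DecidableRel K2graph.Adj :=
  inferInstanceAs (DecidableRel (⊤ : SimpleGraph (Fin 2)).Adj)

instance : DecidableRel (cycleGraph 4).Adj :=
  inferInstanceAs (DecidableRel (fromRel fun x y : ZMod 4 => x - y = 1).Adj)

instance : DecidableRel K33graph.Adj := fun v w =>
  inferInstanceAs (Decidable (v.isLeft ∧ w.isRight ∨ v.isRight ∧ w.isLeft))

instance : DecidablePred (Even : ZMod (2 * 3) → Prop) := fun a =>
  inferInstanceAs (Decidable (∃ r, a = r + r))

instance : DecidableRel (biwheel 3).Adj
  | .inl a, .inl b => decidable_of_iff (a ≠ b ∧ (a - b = 1 ∨ b - a = 1)) (by simp [biwheel])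
  | .inl a, .inr k =>
    decidable_of_iff (k = 0 ∧ Even a ∨ k = 1 ∧ ¬ Even a) (by simp [biwheel])
  | .inr k, .inl a =>
    decidable_of_iff (k = 0 ∧ Even a ∨ k = 1 ∧ ¬ Even a) (by simp [biwheel])
  | .inr _, .inr _ => isFalse (by simp [biwheel])

lemma isRegularBipartite_K2graph : IsRegularBipartite K2graph 1 1 :=
  isRegularBipartite_of_coloring (fun v => v == 0) (by decide) (by decide) (by decide)
    (by decide)

lemma isRegularBipartite_cycleGraph_four : IsRegularBipartite (cycleGraph 4) 2 2 :=
  isRegularBipartite_of_coloring (fun v => v.val % 2 == 0) (by decide) (by decide) (by decide)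
    (by decide)

lemma isRegularBipartite_K33graph : IsRegularBipartite K33graph 3 3 :=
  isRegularBipartite_of_coloring Sum.isLeft (by decide) (by decide) (by decide) (by decide)

lemma isRegularBipartite_biwheel_three : IsRegularBipartite (biwheel 3) 4 3 :=
  isRegularBipartite_of_coloring (Sum.elim (fun a => a.val % 2 == 0) (fun k => k == 1))
    (by decide) (by decide) (by decide) (by decide)

/-- The only minimal braces of order at most eight are `K₂`, `C₄`,
`K_{3,3}` and the cube `B₈` (the biwheel of order eight). -/
theorem statement8 {V : Type*} [Fintype V] (G : SimpleGraph V) :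
    (IsMinimalBrace G ∧ Fintype.card V ≤ 8) ↔
      (Nonempty (G ≃g K2graph) ∨ Nonempty (G ≃g cycleGraph 4) ∨
       Nonempty (G ≃g K33graph) ∨ Nonempty (G ≃g biwheel 3)) := by
  rw [isRegularBipartite_K2graph.nonempty_iso_iff (Or.inl rfl),
    isRegularBipartite_cycleGraph_four.nonempty_iso_iff (Or.inl rfl),
    isRegularBipartite_K33graph.nonempty_iso_iff (Or.inl rfl),
    isRegularBipartite_biwheel_three.nonempty_iso_iff (Or.inr rfl), ← Nat.card_eq_fintype_card]
  refine ⟨fun ⟨h, hV⟩ => h.isRegularBipartite hV, ?_⟩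
  rintro (h | h | h | h) <;> refine ⟨?_, h.card_eq.trans_le (by norm_num)⟩
  · exact h.isMinimalBrace le_rfl le_rfl (by norm_num) (by norm_num)
  · exact h.isMinimalBrace (by norm_num) le_rfl (by norm_num) (by norm_num)
  · exact h.isMinimalBrace (by norm_num) le_rfl (by norm_num) (by norm_num)
  · exact h.isMinimalBrace (by norm_num) (by norm_num) (by norm_num) (by norm_num)

end MinimalBraces
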